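/- Let α > 1 and let F: ℝ^d → ℝ be any measurable function with ∫ e^{F(ℓ)} L(dℓ) < ∞, where L is a probability measure on ℝ^d. Then ∫ ∫_0^1 α w^{−1} (1−w)^{α−1} σ(σ^{−1}(w) + F(ℓ)) dw L(dℓ) < ∞, where σ is the logistic function. -/
import Mathlib


open MeasureTheory
open scoped ENNReal

/-- The logistic function `σ(x) = 1/(1 + e^{-x})`. -/
noncomputable def logistic (x : ℝ) : ℝ := 1 / (1 + Real.exp (-x))

/-- The logit function `σ⁻¹(w) = log (w/(1-w))`. -/
noncomputable def logit (w : ℝ) : ℝ := Real.log (w / (1 - w))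

lemma logistic_nonneg (x : ℝ) : 0 ≤ logistic x := by
  unfold logistic
  positivity

lemma logistic_le_one (x : ℝ) : logistic x ≤ 1 := by
  unfold logistic
  rw [div_le_one (by positivity)]
  nlinarith [Real.exp_pos (-x)]

lemma logistic_le_exp (x : ℝ) : logistic x ≤ Real.exp x := by
  unfold logistic
  rw [div_le_iff₀ (by positivity)]
  have h : Real.exp x * Real.exp (-x) = 1 := by
    rw [← Real.exp_add]; simp
  nlinarith [Real.exp_pos x, Real.exp_pos (-x)]

lemma key_bound (α : ℝ) (hα : 1 < α) (f : ℝ) {w : ℝ} (hw : w ∈ Set.Ioo (0:ℝ) 1) :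
    α * w⁻¹ * (1 - w) ^ (α - 1) * logistic (logit w + f)
      ≤ 2 * α * (1 + Real.exp f) := by
  obtain ⟨hw0, hw1⟩ := hw
  have h1w : 0 < 1 - w := by linarith
  have hr1 : (1 - w) ^ (α - 1) ≤ 1 :=
    Real.rpow_le_one (le_of_lt h1w) (by linarith) (by linarith)
  have hr0 : 0 ≤ (1 - w) ^ (α - 1) := Real.rpow_nonneg (le_of_lt h1w) _
  have hα0 : 0 < α := by linarith
  have hef : 0 < Real.exp f := Real.exp_pos f
  rcases le_or_gt (1/2 : ℝ) w with hw2 | hw2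
  · -- w ≥ 1/2 : use logistic ≤ 1, w⁻¹ ≤ 2
    have hwinv : w⁻¹ ≤ 2 := by
      rw [inv_le_comm₀ (by linarith) (by norm_num)]
      linarith
    have : α * w⁻¹ * (1 - w) ^ (α - 1) * logistic (logit w + f) ≤ α * 2 * 1 * 1 := by
      gcongr <;> first
        | exact logistic_nonneg _
        | exact logistic_le_one _
        | exact hα0.le
        | positivity
    nlinarith
  · -- w < 1/2 : use logistic ≤ exp
    have hlog : logistic (logit w + f) ≤ w / (1 - w) * Real.exp f := by
      have := logistic_le_exp (logit w + f)
      rwa [Real.exp_add, logit, Real.exp_log (by positivity)] at this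
    have step1 : α * w⁻¹ * (1 - w) ^ (α - 1) * logistic (logit w + f)
        ≤ α * w⁻¹ * (1 - w) ^ (α - 1) * (w / (1 - w) * Real.exp f) := by
      gcongr <;> first
        | exact hlog
        | positivity
    have heq : α * w⁻¹ * (1 - w) ^ (α - 1) * (w / (1 - w) * Real.exp f)
        = α * (1 - w) ^ (α - 1) * ((1 - w)⁻¹ * Real.exp f) := by
      field_simp
    have hinv : (1 - w)⁻¹ ≤ 2 := by
      rw [inv_le_comm₀ (by linarith) (by norm_num)]
      linarith
    have step2 : α * (1 - w) ^ (α - 1) * ((1 - w)⁻¹ * Real.exp f)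
        ≤ α * 1 * (2 * Real.exp f) := by
      gcongr <;> first
        | exact hα0.le
        | exact hr1
        | exact hinv
        | positivity
    nlinarith [step1, heq ▸ step1]

/-- For `α > 1` and measurable `F : ℝᵈ → ℝ` with `∫ e^{F(ℓ)} L(dℓ) < ∞`, `L` a
probability measure, the expected total activation
`∫ ∫₀¹ α w⁻¹ (1-w)^{α-1} σ(σ⁻¹(w) + F(ℓ)) dw L(dℓ)` is finite. -/
theorem stmt_7 {d : ℕ} (α : ℝ) (hα : 1 < α)
    (L : Measure (Fin d → ℝ)) [IsProbabilityMeasure L]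
    (F : (Fin d → ℝ) → ℝ) (hF : Measurable F)
    (hint : ∫⁻ ℓ, ENNReal.ofReal (Real.exp (F ℓ)) ∂L < ⊤) :
    ∫⁻ ℓ, (∫⁻ w in Set.Ioo (0 : ℝ) 1,
        ENNReal.ofReal (α * w⁻¹ * (1 - w) ^ (α - 1) * logistic (logit w + F ℓ))) ∂L
      < ⊤ := by
  have hα0 : 0 < α := by linarith
  have inner_bound : ∀ ℓ, (∫⁻ w in Set.Ioo (0 : ℝ) 1,
      ENNReal.ofReal (α * w⁻¹ * (1 - w) ^ (α - 1) * logistic (logit w + F ℓ)))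
      ≤ ENNReal.ofReal (2 * α) + ENNReal.ofReal (2 * α) * ENNReal.ofReal (Real.exp (F ℓ)) := by
    intro ℓ
    have step : (∫⁻ w in Set.Ioo (0 : ℝ) 1,
        ENNReal.ofReal (α * w⁻¹ * (1 - w) ^ (α - 1) * logistic (logit w + F ℓ)))
        ≤ ∫⁻ _ in Set.Ioo (0 : ℝ) 1, ENNReal.ofReal (2 * α * (1 + Real.exp (F ℓ))) := by
      apply setLIntegral_mono measurable_const
      intro w hw
      exact ENNReal.ofReal_le_ofReal (key_bound α hα (F ℓ) hw)
    calc (∫⁻ w in Set.Ioo (0 : ℝ) 1,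
        ENNReal.ofReal (α * w⁻¹ * (1 - w) ^ (α - 1) * logistic (logit w + F ℓ)))
        ≤ ∫⁻ _ in Set.Ioo (0 : ℝ) 1, ENNReal.ofReal (2 * α * (1 + Real.exp (F ℓ))) := step
      _ = ENNReal.ofReal (2 * α * (1 + Real.exp (F ℓ))) * volume (Set.Ioo (0:ℝ) 1) := by
          rw [setLIntegral_const]
      _ = ENNReal.ofReal (2 * α * (1 + Real.exp (F ℓ))) := by
          simp [Real.volume_Ioo]
      _ = ENNReal.ofReal (2 * α) + ENNReal.ofReal (2 * α) * ENNReal.ofReal (Real.exp (F ℓ)) := by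
          rw [← ENNReal.ofReal_mul (by positivity), ← ENNReal.ofReal_add (by positivity)
            (by positivity)]
          ring_nf
  calc ∫⁻ ℓ, (∫⁻ w in Set.Ioo (0 : ℝ) 1,
        ENNReal.ofReal (α * w⁻¹ * (1 - w) ^ (α - 1) * logistic (logit w + F ℓ))) ∂L
      ≤ ∫⁻ ℓ, (ENNReal.ofReal (2 * α)
          + ENNReal.ofReal (2 * α) * ENNReal.ofReal (Real.exp (F ℓ))) ∂L :=
        lintegral_mono inner_bound
    _ = ENNReal.ofReal (2 * α)
          + ENNReal.ofReal (2 * α) * ∫⁻ ℓ, ENNReal.ofReal (Real.exp (F ℓ)) ∂L := by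
        rw [lintegral_add_left measurable_const, lintegral_const_mul _
          ((Measurable.exp hF).ennreal_ofReal)]
        simp
    _ < ⊤ := by
        apply ENNReal.add_lt_top.2
        exact ⟨ENNReal.ofReal_lt_top, ENNReal.mul_lt_top ENNReal.ofReal_lt_top hint⟩
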